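/- arXiv:2008.00926 — 6 statements merged into one kernel-verified Lean document; each statement's English description precedes it below -/
import Mathlib

section
/- For every k ∈ ℕ, the graph G formed from two disjoint copies G1, G2, each a disjoint union of two cliques K_{6k+3}, together with the complete bipartite graph between V(G1) and V(G2), is K3-divisible, has 24k+12 vertices, minimum degree 18k+8 = 3|G|/4 − 1, and has no K3-decomposition. -/
/-- A K3-decomposition of `G`. -/
def IsTriangleDecomp {V : Type*} (G : SimpleGraph V) (T : Finset (Finset V)) : Prop :=
  (∀ t ∈ T, t.card = 3 ∧ ∀ x ∈ t, ∀ y ∈ t, x ≠ y → G.Adj x y) ∧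
  (∀ x y, G.Adj x y → ∃! t, t ∈ T ∧ x ∈ t ∧ y ∈ t)

/-- The extremal example for the Nash-Williams conjecture: vertices are
`(s, c, i)` where `s` indicates the side (`G1` or `G2`), `c` indicates which
clique of size `6k+3` within that side, and `i` is the index within the clique.
Two distinct vertices are adjacent iff they are on different sides (the complete
bipartite graph between `V(G1)` and `V(G2)`), or on the same side and in the
same clique. -/
def exG (k : ℕ) : SimpleGraph (Fin 2 × Fin 2 × Fin (6 * k + 3)) where
  Adj v w := v ≠ w ∧ (v.1 ≠ w.1 ∨ v.2.1 = w.2.1)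
  symm := by
    constructor
    intro v w h
    exact ⟨fun e => h.1 e.symm, by tauto⟩
  loopless := by constructor; intro v h; exact h.1 rfl

instance (k : ℕ) : DecidableRel (exG k).Adj :=
  fun v w => inferInstanceAs (Decidable (v ≠ w ∧ (v.1 ≠ w.1 ∨ v.2.1 = w.2.1)))

/-!
Call an edge of `exG k` crossing if it joins the two sides. A triangle has either no crossing
edge or exactly two, and in the latter case its third edge lies inside a side; hence a
K3-decomposition has at most twice as many crossing edges as edges inside the sides. But there
are `(12k+6)²` crossing edges and only `(24k+12)(6k+2)/2` edges inside the sides.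
-/

open Finset

lemma card_cross_offDiag_le_card_inner_offDiag {V : Type*} [DecidableEq V] {t : Finset V}
    (ht : #t = 3) (s : Finset V) :
    #{p ∈ t.offDiag | p.1 ∈ s ∧ p.2 ∉ s} ≤ #{p ∈ t.offDiag | (p.1 ∈ s ↔ p.2 ∈ s)} := by
  have hcross : {p ∈ t.offDiag | p.1 ∈ s ∧ p.2 ∉ s} ⊆ (t ∩ s) ×ˢ (t \ s) := by
    intro p hp
    simp only [mem_filter, mem_offDiag] at hp
    simp only [mem_product, mem_inter, mem_sdiff]
    tauto
  have hinner : (t ∩ s).offDiag ∪ (t \ s).offDiag ⊆ {p ∈ t.offDiag | (p.1 ∈ s ↔ p.2 ∈ s)} := by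
    intro p hp
    simp only [mem_union, mem_offDiag, mem_inter, mem_sdiff] at hp
    simp only [mem_filter, mem_offDiag]
    tauto
  have hdisj : Disjoint (t ∩ s).offDiag (t \ s).offDiag := by
    refine disjoint_left.mpr fun p hp₁ hp₂ => ?_
    simp only [mem_offDiag, mem_inter, mem_sdiff] at hp₁ hp₂
    exact hp₂.1.2 hp₁.1.2
  have hsplit := card_inter_add_card_sdiff t s
  have hcross' := card_le_card hcross
  have hinner' := card_le_card hinner
  rw [card_product] at hcross'
  rw [card_union_of_disjoint hdisj, offDiag_card, offDiag_card] at hinner'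
  generalize #(t ∩ s) = m at *
  generalize #(t \ s) = n at *
  obtain rfl : n = 3 - m := by omega
  have hm : m ≤ 3 := by omega
  interval_cases m <;> omega

section TriangleDecomp

variable {V : Type*} [Fintype V] [DecidableEq V] {G : SimpleGraph V} [DecidableRel G.Adj]
  {T : Finset (Finset V)}

lemma IsTriangleDecomp.card_filter_adj_eq_sum (hT : IsTriangleDecomp G T)
    (q : V × V → Prop) [DecidablePred q] :
    #{p : V × V | G.Adj p.1 p.2 ∧ q p} = ∑ t ∈ T, #{p ∈ t.offDiag | q p} := by
  obtain ⟨htri, huniq⟩ := hT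
  rw [← card_biUnion]
  · congr 1
    ext ⟨x, y⟩
    simp only [mem_filter, mem_univ, true_and, mem_biUnion, mem_offDiag]
    constructor
    · rintro ⟨hxy, hq⟩
      obtain ⟨t, ⟨htT, hx, hy⟩, -⟩ := huniq x y hxy
      exact ⟨t, htT, ⟨hx, hy, hxy.ne⟩, hq⟩
    · rintro ⟨t, htT, ⟨hx, hy, hne⟩, hq⟩
      exact ⟨(htri t htT).2 x hx y hy hne, hq⟩
  · intro t₁ ht₁ t₂ ht₂ hne
    refine disjoint_left.mpr fun p hp₁ hp₂ => hne ?_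
    simp only [mem_filter, mem_offDiag] at hp₁ hp₂
    obtain ⟨⟨hx₁, hy₁, hxy⟩, -⟩ := hp₁
    obtain ⟨⟨hx₂, hy₂, -⟩, -⟩ := hp₂
    exact (huniq _ _ ((htri t₁ ht₁).2 _ hx₁ _ hy₁ hxy)).unique ⟨ht₁, hx₁, hy₁⟩ ⟨ht₂, hx₂, hy₂⟩

lemma IsTriangleDecomp.card_cross_le_card_inner (hT : IsTriangleDecomp G T) (s : Finset V) :
    #{p : V × V | G.Adj p.1 p.2 ∧ (p.1 ∈ s ∧ p.2 ∉ s)} ≤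
      #{p : V × V | G.Adj p.1 p.2 ∧ (p.1 ∈ s ↔ p.2 ∈ s)} := by
  rw [hT.card_filter_adj_eq_sum, hT.card_filter_adj_eq_sum]
  exact sum_le_sum fun t ht => card_cross_offDiag_le_card_inner_offDiag (hT.1 t ht).1 s

end TriangleDecomp

abbrev ExGVertex (k : ℕ) := Fin 2 × Fin 2 × Fin (6 * k + 3)

section exG

variable {k : ℕ}

lemma exG_adj {v w : ExGVertex k} :
    (exG k).Adj v w ↔ v ≠ w ∧ (v.1 ≠ w.1 ∨ v.2.1 = w.2.1) := Iff.rfl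

lemma card_exG_clique_erase (v : ExGVertex k) :
    #(({v.1} ×ˢ {v.2.1} ×ˢ univ).erase v) = 6 * k + 2 := by
  rw [card_erase_of_mem (by simp), card_product, card_product]
  simp

lemma exG_neighborFinset (v : ExGVertex k) :
    (exG k).neighborFinset v = {v.1}ᶜ ×ˢ univ ∪ ({v.1} ×ˢ {v.2.1} ×ˢ univ).erase v := by
  ext w
  simp only [SimpleGraph.mem_neighborFinset, exG_adj, mem_union, mem_product, mem_compl,
    mem_singleton, mem_univ, and_true, mem_erase]
  constructor
  · rintro ⟨hne, hside | hclique⟩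
    · exact Or.inl (Ne.symm hside)
    · by_cases hside : w.1 = v.1
      · exact Or.inr ⟨Ne.symm hne, hside, hclique.symm⟩
      · exact Or.inl hside
  · rintro (hside | ⟨hne, -, hclique⟩)
    · exact ⟨fun h => hside (congrArg Prod.fst h).symm, Or.inl (Ne.symm hside)⟩
    · exact ⟨Ne.symm hne, Or.inr hclique.symm⟩

lemma exG_degree (v : ExGVertex k) : (exG k).degree v = 18 * k + 8 := by
  rw [← SimpleGraph.card_neighborFinset_eq_degree, exG_neighborFinset,
    card_union_of_disjoint, card_exG_clique_erase, card_product, card_compl]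
  · simp only [card_singleton, card_univ, Fintype.card_prod, Fintype.card_fin]
    omega
  · refine disjoint_left.mpr fun w hw₁ hw₂ => ?_
    simp only [mem_product, mem_compl, mem_singleton, mem_erase] at hw₁ hw₂
    exact hw₁.1 hw₂.2.1

lemma card_exG_cross :
    #{p : ExGVertex k × ExGVertex k | (exG k).Adj p.1 p.2 ∧ (p.1.1 = 0 ∧ ¬ p.2.1 = 0)} =
      (12 * k + 6) * (12 * k + 6) := by
  have hcut : ({p | (exG k).Adj p.1 p.2 ∧ (p.1.1 = 0 ∧ ¬ p.2.1 = 0)} :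
      Finset (ExGVertex k × ExGVertex k)) = ({0} ×ˢ univ) ×ˢ ({1} ×ˢ univ) := by
    ext ⟨v, w⟩
    simp only [mem_filter, mem_univ, true_and, exG_adj, mem_product, mem_singleton, and_true]
    grind
  simp only [hcut, card_product, card_singleton, card_univ, Fintype.card_prod, Fintype.card_fin]
  ring

lemma card_exG_inner :
    #{p : ExGVertex k × ExGVertex k | (exG k).Adj p.1 p.2 ∧ (p.1.1 = 0 ↔ p.2.1 = 0)} =
      (24 * k + 12) * (6 * k + 2) := by
  have hfiber (v : ExGVertex k) :
      ({w | (exG k).Adj v w ∧ (v.1 = 0 ↔ w.1 = 0)} : Finset (ExGVertex k)) =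
        ({v.1} ×ˢ {v.2.1} ×ˢ univ).erase v := by
    ext w
    simp only [mem_filter, mem_univ, true_and, exG_adj, mem_product, mem_singleton, and_true,
      mem_erase]
    grind
  rw [card_filter, Fintype.sum_prod_type]
  simp only [← card_filter, hfiber, card_exG_clique_erase, sum_const, card_univ, smul_eq_mul,
    Fintype.card_prod, Fintype.card_fin]
  ring

lemma card_exG_edgeFinset : #(exG k).edgeFinset = 3 * ((4 * k + 2) * (18 * k + 8)) := by
  have hsum := (exG k).sum_degrees_eq_twice_card_edges
  simp only [exG_degree, sum_const, card_univ, smul_eq_mul, Fintype.card_prod,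
    Fintype.card_fin] at hsum
  linarith

lemma exG_not_isTriangleDecomp {T : Finset (Finset (ExGVertex k))} :
    ¬ IsTriangleDecomp (exG k) T := by
  intro hT
  have hcut := hT.card_cross_le_card_inner {v | v.1 = 0}
  simp only [mem_filter, mem_univ, true_and, card_exG_cross, card_exG_inner] at hcut
  nlinarith

end exG

theorem stmt_4 (k : ℕ) :
    Fintype.card (Fin 2 × Fin 2 × Fin (6 * k + 3)) = 24 * k + 12 ∧
    (∀ v, (exG k).degree v = 18 * k + 8) ∧
    3 ∣ (exG k).edgeFinset.card ∧
    (∀ v, Even ((exG k).degree v)) ∧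
    ¬ ∃ T, IsTriangleDecomp (exG k) T := by
  refine ⟨?_, exG_degree, ⟨_, card_exG_edgeFinset⟩, fun v => ?_,
    fun ⟨_, hT⟩ => exG_not_isTriangleDecomp hT⟩
  · simp only [Fintype.card_prod, Fintype.card_fin]
    ring
  · rw [exG_degree]
    exact ⟨9 * k + 4, by ring⟩
end

section
/- Let G be the graph on vertex set A ∪ B ∪ C (pairwise disjoint) where G[A] and G[C] are complete, B is independent, G[A,B] and G[B,C] are complete bipartite, and there are no edges between A and C. Then every copy of C_4 in G contains an even number of edges with both endpoints in A. Consequently, if the number of edges inside A is odd, G has no C_4-decomposition. -/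
open Finset
open scoped Classical

/-- The four edges of the 4-cycle `a b c d`. -/
def C4edges {V : Type*} [DecidableEq V] (a b c d : V) : Finset (Sym2 V) :=
  {s(a, b), s(b, c), s(c, d), s(d, a)}

theorem stmt_7 {V : Type*} [Fintype V] [DecidableEq V] (A B C : Finset V)
    (hAB : Disjoint A B) (hAC : Disjoint A C) (hBC : Disjoint B C)
    (hcover : ∀ v, v ∈ A ∨ v ∈ B ∨ v ∈ C)
    (G : SimpleGraph V)
    (hadj : ∀ x y, G.Adj x y ↔ x ≠ y ∧
      ((x ∈ A ∧ y ∈ A) ∨ (x ∈ C ∧ y ∈ C) ∨ (x ∈ A ∧ y ∈ B) ∨ (x ∈ B ∧ y ∈ A) ∨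
        (x ∈ B ∧ y ∈ C) ∨ (x ∈ C ∧ y ∈ B))) :
    -- every copy of C₄ in G contains an even number of edges inside A
    (∀ a b c d : V, [a, b, c, d].Nodup →
      G.Adj a b → G.Adj b c → G.Adj c d → G.Adj d a →
      Even (((C4edges a b c d).filter (fun e => ∀ x ∈ e, x ∈ A)).card)) ∧
    -- hence, if the number of edges inside A is odd, G has no C₄-decomposition
    (Odd ((G.edgeFinset.filter (fun e => ∀ x ∈ e, x ∈ A)).card) →
      ¬ ∃ (m : ℕ) (q : Fin m → V × V × V × V),
        (∀ i, [(q i).1, (q i).2.1, (q i).2.2.1, (q i).2.2.2].Nodup ∧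
          G.Adj (q i).1 (q i).2.1 ∧ G.Adj (q i).2.1 (q i).2.2.1 ∧
          G.Adj (q i).2.2.1 (q i).2.2.2 ∧ G.Adj (q i).2.2.2 (q i).1) ∧
        (∀ e ∈ G.edgeFinset,
          ∃! i : Fin m, e ∈ C4edges (q i).1 (q i).2.1 (q i).2.2.1 (q i).2.2.2)) := by
  -- a vertex adjacent to an `A`-vertex lies in `A ∪ B`
  have hnbr : ∀ x y, G.Adj x y → x ∈ A → y ∉ A → y ∈ B := by
    intro x y h hx hy
    rw [hadj] at h
    rcases h.2 with ⟨_, h2⟩|⟨h1, _⟩|⟨_, h2⟩|⟨h1, _⟩|⟨h1, _⟩|⟨h1, _⟩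
    · exact absurd h2 hy
    · exact absurd (Finset.disjoint_left.mp hAC hx h1) (fun h => h)
    · exact h2
    · exact absurd (Finset.disjoint_left.mp hAB hx h1) (fun h => h)
    · exact absurd (Finset.disjoint_left.mp hAB hx h1) (fun h => h)
    · exact absurd (Finset.disjoint_left.mp hAC hx h1) (fun h => h)
  -- no edges inside `B`
  have hBB : ∀ x y, G.Adj x y → x ∈ B → y ∈ B → False := by
    intro x y h hx hy
    rw [hadj] at h
    rcases h.2 with ⟨h1, _⟩|⟨h1, _⟩|⟨h1, _⟩|⟨_, h2⟩|⟨_, h2⟩|⟨h1, _⟩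
    · exact Finset.disjoint_left.mp hAB h1 hx
    · exact Finset.disjoint_left.mp hBC hx h1
    · exact Finset.disjoint_left.mp hAB h1 hx
    · exact Finset.disjoint_left.mp hAB h2 hy
    · exact Finset.disjoint_left.mp hBC hy h2
    · exact Finset.disjoint_left.mp hBC hx h1
  have key : ∀ a b c d : V, [a, b, c, d].Nodup →
      G.Adj a b → G.Adj b c → G.Adj c d → G.Adj d a →
      Even (((C4edges a b c d).filter (fun e => ∀ x ∈ e, x ∈ A)).card) := by
    intro a b c d hnd hab hbc hcd hda
    simp only [List.nodup_cons, List.mem_cons, List.mem_singleton, List.not_mem_nil] at hnd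
    have nab : a ≠ b := by tauto
    have nac : a ≠ c := by tauto
    have nad : a ≠ d := by tauto
    have nbc : b ≠ c := by tauto
    have nbd : b ≠ d := by tauto
    have ncd : c ≠ d := by tauto
    have hP : ∀ u v : V, (∀ x ∈ s(u,v), x ∈ A) ↔ (u ∈ A ∧ v ∈ A) := by
      intro u v
      constructor
      · intro h; exact ⟨h u (by simp), h v (by simp)⟩
      · rintro ⟨hu, hv⟩ x hx; rw [Sym2.mem_iff] at hx; rcases hx with rfl|rfl <;> assumption
    have e1 : s(a,b) ≠ s(b,c) := by simp [Sym2.eq_iff]; tauto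
    have e2 : s(a,b) ≠ s(c,d) := by simp [Sym2.eq_iff]; tauto
    have e3 : s(a,b) ≠ s(d,a) := by simp [Sym2.eq_iff]; tauto
    have e4 : s(b,c) ≠ s(c,d) := by simp [Sym2.eq_iff]; tauto
    have e5 : s(b,c) ≠ s(d,a) := by simp [Sym2.eq_iff]; tauto
    have e6 : s(c,d) ≠ s(d,a) := by simp [Sym2.eq_iff]; tauto
    have hcard : ((C4edges a b c d).filter (fun e => ∀ x ∈ e, x ∈ A)).card
        = (if a∈A∧b∈A then 1 else 0) + (if b∈A∧c∈A then 1 else 0)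
          + (if c∈A∧d∈A then 1 else 0) + (if d∈A∧a∈A then 1 else 0) := by
      rw [C4edges, Finset.card_filter]
      rw [Finset.sum_insert (by simp [e1, e2, e3]), Finset.sum_insert (by simp [e4, e5]),
        Finset.sum_insert (by simp [e6]), Finset.sum_singleton]
      simp only [hP]
      ring
    rw [hcard]
    by_cases ha : a ∈ A <;> by_cases hb : b ∈ A <;> by_cases hc : c ∈ A <;> by_cases hd : d ∈ A
    -- kill the impossible odd configurations
    · (simp [ha, hb, hc, hd]) <;> decide
    · -- a b c ∈ A, d ∉ A : two edges
      (simp [ha, hb, hc, hd]) <;> decide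
    · -- a b d ∈ A, c ∉ A : two edges
      (simp [ha, hb, hc, hd]) <;> decide
    · -- a b ∈ A, c d ∉ A : impossible
      exact absurd (hBB c d hcd (hnbr b c hbc hb hc) (hnbr a d hda.symm ha hd)) (by simp)
    · (simp [ha, hb, hc, hd]) <;> decide
    · (simp [ha, hb, hc, hd]) <;> decide
    · -- a d ∈ A, b c ∉ A : impossible (edge d a inside A, b,c ∈ B adjacent)
      exact absurd (hBB b c hbc (hnbr a b hab ha hb) (hnbr d c hcd.symm hd hc)) (by simp)
    · (simp [ha, hb, hc, hd]) <;> decide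
    · (simp [ha, hb, hc, hd]) <;> decide
    · -- b c ∈ A, a d ∉ A : impossible
      exact absurd (hBB d a hda (hnbr c d hcd hc hd) (hnbr b a hab.symm hb ha)) (by simp)
    · (simp [ha, hb, hc, hd]) <;> decide
    · (simp [ha, hb, hc, hd]) <;> decide
    · -- c d ∈ A, a b ∉ A : impossible
      exact absurd (hBB a b hab (hnbr d a hda hd ha) (hnbr c b hbc.symm hc hb)) (by simp)
    · (simp [ha, hb, hc, hd]) <;> decide
    · (simp [ha, hb, hc, hd]) <;> decide
    · (simp [ha, hb, hc, hd]) <;> decide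
  refine ⟨key, ?_⟩
  rintro hodd ⟨m, q, hq, huniq⟩
  have hsub : ∀ i : Fin m,
      C4edges (q i).1 (q i).2.1 (q i).2.2.1 (q i).2.2.2 ⊆ G.edgeFinset := by
    intro i e he
    obtain ⟨-, h1, h2, h3, h4⟩ := hq i
    rw [C4edges] at he
    simp only [Finset.mem_insert, Finset.mem_singleton] at he
    rcases he with rfl|rfl|rfl|rfl <;> rw [SimpleGraph.mem_edgeFinset] <;>
      simpa using (by assumption : G.Adj _ _)
  have hpart : G.edgeFinset.filter (fun e => ∀ x ∈ e, x ∈ A)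
      = (Finset.univ : Finset (Fin m)).biUnion
        (fun i => (C4edges (q i).1 (q i).2.1 (q i).2.2.1 (q i).2.2.2).filter
          (fun e => ∀ x ∈ e, x ∈ A)) := by
    ext e
    simp only [Finset.mem_filter, Finset.mem_biUnion, Finset.mem_univ, true_and]
    constructor
    · rintro ⟨he, hpe⟩
      obtain ⟨i, hi, -⟩ := huniq e he
      exact ⟨i, hi, hpe⟩
    · rintro ⟨i, hi1, hi2⟩
      exact ⟨hsub i hi1, hi2⟩
  have hdisj : ∀ i ∈ (Finset.univ : Finset (Fin m)), ∀ j ∈ (Finset.univ : Finset (Fin m)),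
      i ≠ j → Disjoint
        ((C4edges (q i).1 (q i).2.1 (q i).2.2.1 (q i).2.2.2).filter (fun e => ∀ x ∈ e, x ∈ A))
        ((C4edges (q j).1 (q j).2.1 (q j).2.2.1 (q j).2.2.2).filter (fun e => ∀ x ∈ e, x ∈ A)) := by
    intro i _ j _ hij
    rw [Finset.disjoint_left]
    intro e hei hej
    obtain ⟨hei, -⟩ := Finset.mem_filter.mp hei
    obtain ⟨hej, -⟩ := Finset.mem_filter.mp hej
    obtain ⟨k, -, hk⟩ := huniq e (hsub i hei)
    exact hij ((hk i hei).trans (hk j hej).symm)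
  rw [hpart, Finset.card_biUnion hdisj] at hodd
  rw [Nat.odd_iff, Nat.even_iff.mp ?_] at hodd
  · exact absurd hodd (by norm_num)
  · refine Finset.even_sum _ ?_
    intro i _
    obtain ⟨h0, h1, h2, h3, h4⟩ := hq i
    exact key _ _ _ _ h0 h1 h2 h3 h4
end

section
/- For a graph F, τ(F) divides gcd(F), where τ(F) is the gcd of e(F[X]) over all subsets X ⊆ V(F) that are not C_4-supporting in F, and gcd(F) is the gcd of the vertex degrees of F. -/
open Finset
open scoped Classical

/-- `X` is C₄-supporting in `F` if there are distinct `a, b ∈ X` and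
`c, d ∉ X` with `ac, bd, cd ∈ E(F)`. -/
def C4Supporting {V : Type*} (F : SimpleGraph V) (X : Finset V) : Prop :=
  ∃ a ∈ X, ∃ b ∈ X, a ≠ b ∧ ∃ c d, c ∉ X ∧ d ∉ X ∧ F.Adj a c ∧ F.Adj b d ∧ F.Adj c d

/-- `τ(F)`: the gcd of `e(F[X])` over all non-C₄-supporting subsets `X ⊆ V(F)`. -/
noncomputable def tau {V : Type*} [Fintype V] (F : SimpleGraph V) : ℕ :=
  (Finset.univ.filter (fun X : Finset V => ¬ C4Supporting F X)).gcd
    (fun X => ((F.edgeFinset.filter (fun e => ∀ x ∈ e, x ∈ X))).card)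

/-!
Both `V` and `V \ {v}` fail to be C₄-supporting: the first has no outside vertices, and the
second only the single outside vertex `v`, which cannot be adjacent to itself. Hence `τ(F)`
divides `e(F)` and `e(F - v)`, and so their difference `d(v)`.
-/

namespace SimpleGraph

variable {V : Type*} [Fintype V] (F : SimpleGraph V)

theorem not_c4Supporting_univ : ¬ C4Supporting F univ := by
  rintro ⟨-, -, -, -, -, c, -, hc, -⟩
  exact hc (mem_univ c)

theorem not_c4Supporting_univ_erase (v : V) : ¬ C4Supporting F (univ.erase v) := by
  rintro ⟨-, -, -, -, -, c, d, hc, hd, -, -, hcd⟩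
  obtain rfl : c = v := by simpa using hc
  obtain rfl : d = c := by simpa using hd
  exact F.irrefl hcd

theorem tau_dvd_card_edges_within (X : Finset V) (hX : ¬ C4Supporting F X) :
    tau F ∣ #{e ∈ F.edgeFinset | ∀ x ∈ e, x ∈ X} :=
  Finset.gcd_dvd (by simp [hX])

theorem card_edges_within_univ_erase_add_degree (v : V) :
    #{e ∈ F.edgeFinset | ∀ x ∈ e, x ∈ univ.erase v} + F.degree v = #F.edgeFinset := by
  have avoiding : {e ∈ F.edgeFinset | ∀ x ∈ e, x ∈ univ.erase v} = {e ∈ F.edgeFinset | v ∉ e} :=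
    filter_congr fun e _ => by
      simpa using ⟨fun h hv => h v hv rfl, fun h x hx hxv => h (hxv ▸ hx)⟩
  rw [avoiding, ← card_incidenceFinset_eq_degree, incidenceFinset_eq_filter, add_comm]
  exact card_filter_add_card_filter_not _

end SimpleGraph

theorem stmt_8_general {V : Type*} [Fintype V] (F : SimpleGraph V) :
    tau F ∣ Finset.univ.gcd (fun v : V => F.degree v) := by
  refine Finset.dvd_gcd fun v _ => ?_
  have hall := F.tau_dvd_card_edges_within univ F.not_c4Supporting_univ
  have hdel := F.tau_dvd_card_edges_within _ (F.not_c4Supporting_univ_erase v)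
  rw [filter_true_of_mem fun e _ x _ => mem_univ x,
    ← F.card_edges_within_univ_erase_add_degree v] at hall
  exact (Nat.dvd_add_right hdel).mp hall

/-- `τ(F)` divides the gcd of the vertex degrees of `F`. -/
theorem stmt_8 {V : Type*} [Fintype V] (F : SimpleGraph V)
    (hF : F.edgeFinset.Nonempty) :
    tau F ∣ Finset.univ.gcd (fun v : V => F.degree v) :=
  stmt_8_general F
end

section
/- For coprime positive integers s and t, τ(K_{s,t}) = gcd(s,t) = 1; more generally τ(K_{s,t}) divides gcd(s,t). -/
open Finset
open scoped Classical

lemma not_supp_right (s t : ℕ) (X : Finset (Fin s ⊕ Fin t))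
    (h : ∀ j : Fin t, Sum.inr j ∈ X) :
    ¬ C4Supporting (completeBipartiteGraph (Fin s) (Fin t)) X := by
  rintro ⟨a, ha, b, hb, hab, c, d, hc, hd, hac, hbd, hcd⟩
  cases c with
  | inl c =>
    cases d with
    | inl d => simp [completeBipartiteGraph] at hcd
    | inr d => exact hd (h d)
  | inr c => exact hc (h c)

lemma not_supp_left (s t : ℕ) (X : Finset (Fin s ⊕ Fin t))
    (h : ∀ i : Fin s, Sum.inl i ∈ X) :
    ¬ C4Supporting (completeBipartiteGraph (Fin s) (Fin t)) X := by
  rintro ⟨a, ha, b, hb, hab, c, d, hc, hd, hac, hbd, hcd⟩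
  cases c with
  | inl c => exact hc (h c)
  | inr c =>
    cases d with
    | inl d => exact hd (h d)
    | inr d => simp [completeBipartiteGraph] at hcd

lemma count_right (s t : ℕ) (a0 : Fin s)
    [DecidablePred (fun e : Sym2 (Fin s ⊕ Fin t) =>
      ∀ x ∈ e, x ∈ insert (Sum.inl a0) ((univ : Finset (Fin t)).image Sum.inr))] :
    ((completeBipartiteGraph (Fin s) (Fin t)).edgeFinset.filter
      (fun e => ∀ x ∈ e, x ∈ insert (Sum.inl a0) ((univ : Finset (Fin t)).image Sum.inr))).card = t := by
  have heq : (completeBipartiteGraph (Fin s) (Fin t)).edgeFinset.filter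
      (fun e => ∀ x ∈ e, x ∈ insert (Sum.inl a0) ((univ : Finset (Fin t)).image Sum.inr))
      = univ.image (fun j : Fin t => s(Sum.inl a0, Sum.inr j)) := by
    ext e
    induction e using Sym2.inductionOn with
    | hf x y =>
      simp only [mem_filter, SimpleGraph.mem_edgeFinset, SimpleGraph.mem_edgeSet,
        Sym2.mem_iff, mem_image, mem_insert, mem_univ, true_and]
      constructor
      · rintro ⟨hadj, hmem⟩
        cases x with
        | inl i =>
          cases y with
          | inl j => simp [completeBipartiteGraph] at hadj
          | inr j =>
            have hi : (Sum.inl i : Fin s ⊕ Fin t) = Sum.inl a0 ∨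
                ∃ a, Sum.inr a = Sum.inl i := hmem _ (Or.inl rfl)
            have : i = a0 := by
              rcases hi with h | ⟨a, h⟩
              · simpa using h
              · simp at h
            exact ⟨j, by rw [this]⟩
        | inr i =>
          cases y with
          | inr j => simp [completeBipartiteGraph] at hadj
          | inl j =>
            have hj : (Sum.inl j : Fin s ⊕ Fin t) = Sum.inl a0 ∨
                ∃ a, Sum.inr a = Sum.inl j := hmem _ (Or.inr rfl)
            have : j = a0 := by
              rcases hj with h | ⟨a, h⟩
              · simpa using h
              · simp at h
            exact ⟨i, by rw [this, Sym2.eq_swap]⟩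
      · rintro ⟨j, hj⟩
        rw [Sym2.eq_iff] at hj
        rcases hj with ⟨rfl, rfl⟩ | ⟨rfl, rfl⟩ <;> constructor
        · simp [completeBipartiteGraph]
        · intro z hz
          rcases hz with h | h
          · exact Or.inl h
          · exact Or.inr ⟨j, h.symm⟩
        · simp [completeBipartiteGraph]
        · intro z hz
          rcases hz with h | h
          · exact Or.inr ⟨j, h.symm⟩
          · exact Or.inl h
  rw [heq, card_image_of_injective]
  · simp
  · intro j k h
    simpa using h

lemma count_left (s t : ℕ) (b0 : Fin t)
    [DecidablePred (fun e : Sym2 (Fin s ⊕ Fin t) =>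
      ∀ x ∈ e, x ∈ insert (Sum.inr b0) ((univ : Finset (Fin s)).image Sum.inl))] :
    ((completeBipartiteGraph (Fin s) (Fin t)).edgeFinset.filter
      (fun e => ∀ x ∈ e, x ∈ insert (Sum.inr b0) ((univ : Finset (Fin s)).image Sum.inl))).card = s := by
  have heq : (completeBipartiteGraph (Fin s) (Fin t)).edgeFinset.filter
      (fun e => ∀ x ∈ e, x ∈ insert (Sum.inr b0) ((univ : Finset (Fin s)).image Sum.inl))
      = univ.image (fun i : Fin s => s(Sum.inl i, Sum.inr b0)) := by
    ext e
    induction e using Sym2.inductionOn with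
    | hf x y =>
      simp only [mem_filter, SimpleGraph.mem_edgeFinset, SimpleGraph.mem_edgeSet,
        Sym2.mem_iff, mem_image, mem_insert, mem_univ, true_and]
      constructor
      · rintro ⟨hadj, hmem⟩
        cases x with
        | inl i =>
          cases y with
          | inl j => simp [completeBipartiteGraph] at hadj
          | inr j =>
            have hj : (Sum.inr j : Fin s ⊕ Fin t) = Sum.inr b0 ∨
                ∃ a, Sum.inl a = Sum.inr j := hmem _ (Or.inr rfl)
            have : j = b0 := by
              rcases hj with h | ⟨a, h⟩
              · simpa using h
              · simp at h
            exact ⟨i, by rw [this]⟩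
        | inr i =>
          cases y with
          | inr j => simp [completeBipartiteGraph] at hadj
          | inl j =>
            have hi : (Sum.inr i : Fin s ⊕ Fin t) = Sum.inr b0 ∨
                ∃ a, Sum.inl a = Sum.inr i := hmem _ (Or.inl rfl)
            have : i = b0 := by
              rcases hi with h | ⟨a, h⟩
              · simpa using h
              · simp at h
            exact ⟨j, by rw [this, Sym2.eq_swap]⟩
      · rintro ⟨i, hi⟩
        rw [Sym2.eq_iff] at hi
        rcases hi with ⟨rfl, rfl⟩ | ⟨rfl, rfl⟩ <;> constructor
        · simp [completeBipartiteGraph]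
        · intro z hz
          rcases hz with h | h
          · exact Or.inr ⟨i, h.symm⟩
          · exact Or.inl h
        · simp [completeBipartiteGraph]
        · intro z hz
          rcases hz with h | h
          · exact Or.inl h
          · exact Or.inr ⟨i, h.symm⟩
  rw [heq, card_image_of_injective]
  · simp
  · intro j k h
    simpa using h

lemma tau_dvd {V : Type*} [Fintype V] (F : SimpleGraph V) (X : Finset V)
    (h : ¬ C4Supporting F X) :
    tau F ∣ (F.edgeFinset.filter (fun e => ∀ x ∈ e, x ∈ X)).card := by
  apply Finset.gcd_dvd
  simp [h]

set_option maxHeartbeats 2000000 in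
/-- `τ(K_{s,t})` divides `gcd(s,t)`; in particular if `s` and `t` are coprime
then `τ(K_{s,t}) = 1`. -/
theorem stmt_10 (s t : ℕ) (hs : 0 < s) (ht : 0 < t) :
    tau (completeBipartiteGraph (Fin s) (Fin t)) ∣ Nat.gcd s t ∧
    (Nat.gcd s t = 1 → tau (completeBipartiteGraph (Fin s) (Fin t)) = 1) := by
  obtain ⟨a0⟩ : Nonempty (Fin s) := ⟨⟨0, hs⟩⟩
  obtain ⟨b0⟩ : Nonempty (Fin t) := ⟨⟨0, ht⟩⟩
  have hdt : tau (completeBipartiteGraph (Fin s) (Fin t)) ∣ t := by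
    have h2 := tau_dvd (completeBipartiteGraph (Fin s) (Fin t))
      (insert (Sum.inl a0) ((univ : Finset (Fin t)).image Sum.inr))
      (not_supp_right s t _ fun j => mem_insert_of_mem (mem_image_of_mem _ (mem_univ j)))
    rwa [count_right] at h2
  have hds : tau (completeBipartiteGraph (Fin s) (Fin t)) ∣ s := by
    have h2 := tau_dvd (completeBipartiteGraph (Fin s) (Fin t))
      (insert (Sum.inr b0) ((univ : Finset (Fin s)).image Sum.inl))
      (not_supp_left s t _ fun i => mem_insert_of_mem (mem_image_of_mem _ (mem_univ i)))
    rwa [count_left] at h2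
  have hd := Nat.dvd_gcd hds hdt
  exact ⟨hd, fun h => Nat.eq_one_of_dvd_one (h ▸ hd)⟩
end

section
/- Let G be a k-uniform hypergraph that can be decomposed into edge-disjoint closed tight walks W_0, W_1, …, W_m covering all edges, where W_0 is spanning (every ordered (k−1)-tuple of distinct vertices appears consecutively in W_0). Then G has a tight Euler tour. -/
/-!
The first `k - 1` vertices of a closed tight walk `z` are distinct (they lie in one edge), so a
spanning walk `x` passes through them, say from position `a`. Going once around `z` and then
once around `x` starting at `a` is again a closed tight walk: a window straddling either junction
only sees the shared `(k - 1)`-tuple, so the windows are exactly those of `z` together with those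
of `x`, and every `(k - 1)`-tuple of `x` survives, so the result is still spanning. Splicing
`W_1, …, W_m` into `W_0` one at a time gives a closed tight walk whose edges, with multiplicity,
are exactly `E(G)`.
-/

open Finset
open scoped Classical

/-- The edge traversed at position `i` of a cyclic vertex sequence `x` of length `ℓ`. -/
noncomputable def windowEdge {V : Type*} [DecidableEq V] (k ℓ : ℕ) (x : ZMod ℓ → V)
    (i : ZMod ℓ) : Finset V :=
  (Finset.range k).image (fun j => x (i + (j : ZMod ℓ)))

theorem ZMod.map_natCast_range (ℓ : ℕ) [NeZero ℓ] :
    (Multiset.range ℓ).map (Nat.cast : ℕ → ZMod ℓ) = univ.val := by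
  have hinj : Set.InjOn (Nat.cast : ℕ → ZMod ℓ) (range ℓ) := fun a ha b hb hab => by
    simpa [ZMod.val_cast_of_lt (mem_range.1 ha), ZMod.val_cast_of_lt (mem_range.1 hb)] using
      congrArg ZMod.val hab
  have huniv : (range ℓ).image (Nat.cast : ℕ → ZMod ℓ) = univ :=
    eq_univ_of_card _ (by rw [card_image_of_injOn hinj, card_range, ZMod.card])
  rw [← huniv, image_val_of_injOn hinj, range_val]

theorem ZMod.natCast_sub_of_le {p n : ℕ} (h : p ≤ n) : ((n - p : ℕ) : ZMod p) = n := by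
  rw [Nat.cast_sub h, ZMod.natCast_self, sub_zero]

theorem Multiset.map_univ_val_eq_iff {ι α : Type*} [Fintype ι] {f : ι → α} {s : Finset α} :
    univ.val.map f = s.val ↔ (∀ i, f i ∈ s) ∧ ∀ a ∈ s, ∃! i, f i = a := by
  constructor
  · intro h
    refine ⟨fun i => ?_, fun a ha => ?_⟩
    · rw [← mem_val, ← h]
      exact Multiset.mem_map_of_mem f (mem_univ_val i)
    · rw [← mem_val, ← h, Multiset.mem_map] at ha
      obtain ⟨i, -, rfl⟩ := ha
      exact ⟨i, rfl, fun j hj =>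
        Multiset.inj_on_of_nodup_map (h ▸ s.nodup) _ (mem_univ_val j) _ (mem_univ_val i) hj⟩
  · rintro ⟨hmem, huniq⟩
    have hinj : Function.Injective f := fun i j hij => (huniq _ (hmem j)).unique hij rfl
    refine (Multiset.Nodup.ext (univ.nodup.map hinj) s.nodup).2 fun a => ?_
    simp only [Multiset.mem_map, Finset.mem_univ, true_and, mem_val]
    exact ⟨fun ⟨i, hi⟩ => hi ▸ hmem i, fun ha => (huniq a ha).exists⟩

theorem Multiset.map_univ_sigma {ι α : Type*} [Fintype ι] {κ : ι → Type*}
    [∀ i, Fintype (κ i)] (f : (Σ i, κ i) → α) :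
    univ.val.map f = ∑ i, univ.val.map fun c => f ⟨i, c⟩ := by
  rw [← univ_sigma_univ]
  simp only [Finset.sigma, Multiset.sigma, Multiset.map_bind, Multiset.map_map]
  rfl

section Windows

variable {V : Type*} [DecidableEq V] {k ℓ : ℕ}

/-- `windowEdge` elaborates with offsets in `ZMod ℓ`, ranging over the coercion of `range k`. -/
theorem windowEdge_eq_image (x : ZMod ℓ → V) (i : ZMod ℓ) :
    windowEdge k ℓ x i = (range k).image fun j : ℕ => x (i + j) := by
  simp only [windowEdge, Finset.bind_def, Finset.pure_def, Finset.sup_eq_biUnion,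
    Finset.biUnion_singleton, Finset.image_image]
  rfl

theorem windowEdge_natCast_eq {L p : ℕ} {y : ZMod L → V} {z : ZMod p → V} {n c : ℕ}
    (h : ∀ j < k, y ((n + j : ℕ) : ZMod L) = z ((c + j : ℕ) : ZMod p)) :
    windowEdge k L y n = windowEdge k p z c := by
  simp only [windowEdge_eq_image]
  refine image_congr fun j hj => ?_
  simpa only [Nat.cast_add] using h j (mem_range.1 hj)

theorem le_of_card_windowEdge [NeZero ℓ] {x : ZMod ℓ → V} {i : ZMod ℓ}
    (h : (windowEdge k ℓ x i).card = k) : k ≤ ℓ :=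
  calc k = (windowEdge k ℓ x i).card := h.symm
    _ ≤ (univ.image x).card := card_le_card <| by
      rw [windowEdge_eq_image]
      exact image_subset_iff.2 fun j _ => mem_image_of_mem x (mem_univ _)
    _ ≤ (univ : Finset (ZMod ℓ)).card := card_image_le
    _ = ℓ := by rw [card_univ, ZMod.card]

theorem injOn_of_card_windowEdge {x : ZMod ℓ → V} {i : ZMod ℓ}
    (h : (windowEdge k ℓ x i).card = k) : Set.InjOn (fun j : ℕ => x (i + j)) (range k) := by
  rw [windowEdge_eq_image] at h
  exact injOn_of_card_image_eq (by rw [h, card_range])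

end Windows

section Walks

variable {V : Type*} [DecidableEq V]

noncomputable def walkEdges (k ℓ : ℕ) (x : ZMod ℓ → V) : Multiset (Finset V) :=
  (Multiset.range ℓ).map fun n : ℕ => windowEdge k ℓ x n

variable {k ℓ : ℕ}

theorem walkEdges_eq_map_univ [NeZero ℓ] (x : ZMod ℓ → V) :
    walkEdges k ℓ x = univ.val.map (windowEdge k ℓ x) := by
  rw [← ZMod.map_natCast_range, Multiset.map_map]
  rfl

theorem walkEdges_rotate [NeZero ℓ] (x : ZMod ℓ → V) (a : ZMod ℓ) :
    walkEdges k ℓ (fun n => x (a + n)) = walkEdges k ℓ x := by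
  have hwin : windowEdge k ℓ (fun n => x (a + n)) = windowEdge k ℓ x ∘ Equiv.addLeft a := by
    funext i
    simp only [windowEdge_eq_image, Function.comp_apply, Equiv.coe_addLeft, add_assoc]
  rw [walkEdges_eq_map_univ, walkEdges_eq_map_univ, hwin, ← Multiset.map_map,
    Multiset.map_univ_val_equiv]

end Walks

section Spanning

variable {V : Type*}

def IsSpanning (k ℓ : ℕ) (x : ZMod ℓ → V) : Prop :=
  ∀ t : Fin (k - 1) → V, Function.Injective t →
    ∃ a : ZMod ℓ, ∀ j : Fin (k - 1), x (a + ((j : ℕ) : ZMod ℓ)) = t j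

variable {k ℓ p : ℕ}

theorem IsSpanning.rotate {x : ZMod ℓ → V} (hx : IsSpanning k ℓ x) (a : ZMod ℓ) :
    IsSpanning k ℓ fun n => x (a + n) := fun t ht => by
  obtain ⟨b, hb⟩ := hx t ht
  exact ⟨b - a, fun j => by simp only [← add_assoc, add_sub_cancel, hb]⟩

def cyclicAppend (z : ZMod p → V) (w : ZMod ℓ → V) (n : ZMod (p + ℓ)) : V :=
  if n.val < p then z n.val else w (n.val - p : ℕ)

variable {z : ZMod p → V} {w : ZMod ℓ → V}

theorem cyclicAppend_natCast_of_lt_left (hℓ : k - 1 ≤ ℓ) (hzw : ∀ j < k - 1, w j = z j)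
    {c j : ℕ} (hc : c < p) (hj : j < k) :
    cyclicAppend z w ((c + j : ℕ) : ZMod (p + ℓ)) = z (c + j : ℕ) := by
  rw [cyclicAppend, ZMod.val_natCast, Nat.mod_eq_of_lt (by omega)]
  split_ifs with hcj
  · rfl
  · rw [hzw _ (by omega), ZMod.natCast_sub_of_le (by omega)]

theorem cyclicAppend_natCast_of_lt_right (hp : k - 1 ≤ p) (hzw : ∀ j < k - 1, w j = z j)
    {d j : ℕ} (hd : d < ℓ) (hj : j < k) :
    cyclicAppend z w ((p + d + j : ℕ) : ZMod (p + ℓ)) = w (d + j : ℕ) := by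
  rw [cyclicAppend, ZMod.val_natCast]
  by_cases hwrap : p + d + j < p + ℓ
  · rw [Nat.mod_eq_of_lt hwrap, if_neg (by omega)]
    congr 2
    omega
  · rw [Nat.mod_eq_sub_mod (by omega), Nat.mod_eq_of_lt (by omega), if_pos (by omega),
      ← hzw _ (by omega), show p + d + j - (p + ℓ) = d + j - ℓ by omega,
      ZMod.natCast_sub_of_le (by omega)]

theorem walkEdges_cyclicAppend [DecidableEq V] (hp : k - 1 ≤ p) (hℓ : k - 1 ≤ ℓ)
    (hzw : ∀ j < k - 1, w j = z j) :
    walkEdges k (p + ℓ) (cyclicAppend z w) = walkEdges k p z + walkEdges k ℓ w := by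
  rw [walkEdges, Multiset.range_add, Multiset.map_add, Multiset.map_map]
  congr 1
  · exact Multiset.map_congr rfl fun c hc => windowEdge_natCast_eq fun j hj =>
      cyclicAppend_natCast_of_lt_left hℓ hzw (Multiset.mem_range.1 hc) hj
  · exact Multiset.map_congr rfl fun d hd => windowEdge_natCast_eq fun j hj =>
      cyclicAppend_natCast_of_lt_right hp hzw (Multiset.mem_range.1 hd) hj

theorem IsSpanning.cyclicAppend [NeZero ℓ] (hp : k - 1 ≤ p) (hzw : ∀ j < k - 1, w j = z j)
    (hw : IsSpanning k ℓ w) : IsSpanning k (p + ℓ) (cyclicAppend z w) := fun t ht => by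
  obtain ⟨b, hb⟩ := hw t ht
  refine ⟨((p + b.val : ℕ) : ZMod (p + ℓ)), fun j => ?_⟩
  rw [← Nat.cast_add, cyclicAppend_natCast_of_lt_right hp hzw (ZMod.val_lt b) (by omega),
    Nat.cast_add, ZMod.natCast_zmod_val, hb]

end Spanning

section Splicing

variable {V : Type*} [DecidableEq V] {k : ℕ}

theorem exists_isSpanning_walkEdges_eq_add {ℓ p : ℕ} [NeZero ℓ] [NeZero p] {x : ZMod ℓ → V}
    (hx : IsSpanning k ℓ x) (hℓ : k ≤ ℓ) {z : ZMod p → V} (hz : (windowEdge k p z 0).card = k) :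
    ∃ y : ZMod (p + ℓ) → V,
      IsSpanning k (p + ℓ) y ∧ walkEdges k (p + ℓ) y = walkEdges k ℓ x + walkEdges k p z := by
  have hzinj := injOn_of_card_windowEdge hz
  obtain ⟨a, ha⟩ := hx (fun j => z (j : ℕ)) fun i j hij => Fin.ext <|
    hzinj (mem_range.2 (by omega)) (mem_range.2 (by omega)) (by simpa only [zero_add] using hij)
  have hzw : ∀ j < k - 1, x (a + j) = z j := fun j hj => ha ⟨j, hj⟩
  have hp : k ≤ p := le_of_card_windowEdge hz
  refine ⟨cyclicAppend z fun n => x (a + n), (hx.rotate a).cyclicAppend (by omega) hzw, ?_⟩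
  rw [walkEdges_cyclicAppend (by omega) (by omega) hzw, walkEdges_rotate, add_comm]

theorem exists_walkEdges_eq_add_sum {ℓ₀ : ℕ} [NeZero ℓ₀] {x₀ : ZMod ℓ₀ → V}
    (hx₀ : IsSpanning k ℓ₀ x₀) (hℓ₀ : k ≤ ℓ₀) {m : ℕ} {ℓ : Fin m → ℕ} [∀ i, NeZero (ℓ i)]
    {x : ∀ i, ZMod (ℓ i) → V} (hx : ∀ i, (windowEdge k (ℓ i) (x i) 0).card = k) :
    ∃ L, 0 < L ∧ ∃ y : ZMod L → V,
      walkEdges k L y = walkEdges k ℓ₀ x₀ + ∑ i, walkEdges k (ℓ i) (x i) := by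
  induction m generalizing ℓ₀ with
  | zero => exact ⟨ℓ₀, NeZero.pos ℓ₀, x₀, by simp⟩
  | succ m ih =>
    obtain ⟨y, hy, hyE⟩ := exists_isSpanning_walkEdges_eq_add hx₀ hℓ₀ (hx 0)
    obtain ⟨L, hL, y', hy'⟩ := ih hy (by omega) fun i => hx i.succ
    exact ⟨L, hL, y', by rw [hy', hyE, Fin.sum_univ_succ, add_assoc]⟩

end Splicing

theorem stmt_14_general {V : Type*} [DecidableEq V] (k : ℕ)
    (G : Finset (Finset V)) (hGk : ∀ e ∈ G, e.card = k)
    (m : ℕ) (ℓ : Fin (m + 1) → ℕ) (hℓ : ∀ i, 0 < ℓ i)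
    (x : ∀ i : Fin (m + 1), ZMod (ℓ i) → V)
    (hwalk : ∀ i, ∀ a : ZMod (ℓ i), windowEdge k (ℓ i) (x i) a ∈ G)
    (hpart : ∀ e ∈ G,
      ∃! p : (i : Fin (m + 1)) × ZMod (ℓ i), windowEdge k (ℓ p.1) (x p.1) p.2 = e)
    (hspan : ∀ t : Fin (k - 1) → V, Function.Injective t →
      ∃ a : ZMod (ℓ 0), ∀ j : Fin (k - 1), x 0 (a + ((j : ℕ) : ZMod (ℓ 0))) = t j) :
    ∃ (L : ℕ) (_ : 0 < L) (y : ZMod L → V),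
      (∀ i : ZMod L, windowEdge k L y i ∈ G) ∧
      (∀ e ∈ G, ∃! i : ZMod L, windowEdge k L y i = e) := by
  have : ∀ i, NeZero (ℓ i) := fun i => ⟨(hℓ i).ne'⟩
  have hcard : ∀ i a, (windowEdge k (ℓ i) (x i) a).card = k := fun i a => hGk _ (hwalk i a)
  have hdecomp : ∑ i, walkEdges k (ℓ i) (x i) = G.val := by
    have h := Multiset.map_univ_val_eq_iff.2
      ⟨fun p : (i : Fin (m + 1)) × ZMod (ℓ i) => hwalk p.1 p.2, hpart⟩
    rw [Multiset.map_univ_sigma] at h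
    simpa only [walkEdges_eq_map_univ] using h
  obtain ⟨L, hL, y, hy⟩ := exists_walkEdges_eq_add_sum (x := fun i => x i.succ) hspan
    (le_of_card_windowEdge (hcard 0 0)) fun i => hcard i.succ 0
  have : NeZero L := ⟨hL.ne'⟩
  rw [← Fin.sum_univ_succ (f := fun i => walkEdges k (ℓ i) (x i)), hdecomp,
    walkEdges_eq_map_univ] at hy
  exact ⟨L, hL, y, Multiset.map_univ_val_eq_iff.1 hy⟩

/-- If a `k`-uniform hypergraph `G` decomposes into edge-disjoint closed tight walks
`W_0, …, W_m` covering all edges, where `W_0` is spanning (every ordered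
`(k-1)`-tuple of distinct vertices appears consecutively in `W_0`), then `G` has a
tight Euler tour. -/
theorem stmt_14 {V : Type*} [Fintype V] [DecidableEq V] (k : ℕ) (hk : 1 ≤ k)
    (G : Finset (Finset V)) (hGk : ∀ e ∈ G, e.card = k)
    (m : ℕ) (ℓ : Fin (m + 1) → ℕ) (hℓ : ∀ i, 0 < ℓ i)
    (x : ∀ i : Fin (m + 1), ZMod (ℓ i) → V)
    (hwalk : ∀ i, ∀ a : ZMod (ℓ i), windowEdge k (ℓ i) (x i) a ∈ G)
    (hpart : ∀ e ∈ G,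
      ∃! p : (i : Fin (m + 1)) × ZMod (ℓ i), windowEdge k (ℓ p.1) (x p.1) p.2 = e)
    (hspan : ∀ t : Fin (k - 1) → V, Function.Injective t →
      ∃ a : ZMod (ℓ 0), ∀ j : Fin (k - 1), x 0 (a + ((j : ℕ) : ZMod (ℓ 0))) = t j) :
    ∃ (L : ℕ) (_ : 0 < L) (y : ZMod L → V),
      (∀ i : ZMod L, windowEdge k L y i ∈ G) ∧
      (∀ e ∈ G, ∃! i : ZMod L, windowEdge k L y i = e) :=
  stmt_14_general k G hGk m ℓ hℓ x hwalk hpart hspan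
end

section
/- The tight cycle C^k_{2k} satisfies: for every i with 2 ≤ i ≤ k−1, d_{C^k_{2k}}(i) = 1. Consequently a k-graph G is C^k_{2k}-divisible if and only if 2k divides e(G) and k divides d_G(v) for every vertex v. -/
open Finset
open scoped Classical

/-- The degree of a vertex set `S` in a hypergraph `H`. -/
noncomputable def hdeg {α : Type*} (H : Finset (Finset α)) (S : Finset α) : ℕ :=
  (H.filter (fun e => S ⊆ e)).card

/-- The tight `k`-uniform cycle `C^k_{2k}`, on vertex set `ZMod (2k)`:
edges are the sets of `k` cyclically consecutive vertices. -/
noncomputable def tightCycle (k : ℕ) : Finset (Finset (ZMod (2 * k))) :=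
  (Finset.range (2 * k)).image
    (fun i => (Finset.range k).image (fun j => ((i + j : ℕ) : ZMod (2 * k))))

/-- The vertex set of `C^k_{2k}`. -/
noncomputable def tcVerts (k : ℕ) : Finset (ZMod (2 * k)) :=
  (Finset.range (2 * k)).image (fun i => ((i : ℕ) : ZMod (2 * k)))

/-- `d_{C^k_{2k}}(i)`: the gcd of the degrees of all `i`-subsets of the vertex set
of `C^k_{2k}`. -/
noncomputable def tcDegGcd (k i : ℕ) : ℕ :=
  ((tcVerts k).powerset.filter (fun T => T.card = i)).gcd (hdeg (tightCycle k))

section Aux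

variable {k : ℕ}

/-- The edge of the tight cycle starting at `a`. -/
noncomputable def edgeA (k : ℕ) (a : ZMod (2 * k)) : Finset (ZMod (2 * k)) :=
  (Finset.range k).image (fun j : ℕ => a + (j : ZMod (2 * k)))

lemma mem_edgeA [NeZero (2 * k)] (hk : 2 ≤ k) {a x : ZMod (2 * k)} :
    x ∈ edgeA k a ↔ (x - a).val < k := by
  rw [edgeA, Finset.mem_image]
  constructor
  · rintro ⟨j, hj, rfl⟩
    rw [Finset.mem_range] at hj
    have h : a + (j : ZMod (2 * k)) - a = ((j : ℕ) : ZMod (2 * k)) := by ring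
    rw [h, ZMod.val_cast_of_lt (by omega)]
    exact hj
  · intro h
    exact ⟨(x - a).val, Finset.mem_range.mpr h,
      by rw [ZMod.natCast_rightInverse (x - a)]; ring⟩

lemma edgeA_inj [NeZero (2 * k)] (hk : 2 ≤ k) : Function.Injective (edgeA k) := by
  intro a b hab
  by_contra hne
  have hself : ∀ c : ZMod (2 * k), c ∈ edgeA k c := by
    intro c
    rw [mem_edgeA hk, sub_self, ZMod.val_zero]
    omega
  have h1 : (a - b).val < k := (mem_edgeA hk).mp (hab ▸ hself a)
  have h2 : (b - a).val < k := (mem_edgeA hk).mp (hab.symm ▸ hself b)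
  have hne' : a - b ≠ 0 := sub_ne_zero.mpr hne
  have hba : b - a = -(a - b) := by ring
  rw [hba, ZMod.neg_val, if_neg hne'] at h2
  have := ZMod.val_lt (a - b)
  omega

lemma tightCycle_eq [NeZero (2 * k)] (hk : 2 ≤ k) :
    tightCycle k = Finset.univ.image (edgeA k) := by
  ext e
  rw [tightCycle, Finset.mem_image, Finset.mem_image]
  constructor
  · rintro ⟨i, _, rfl⟩
    refine ⟨((i : ℕ) : ZMod (2 * k)), Finset.mem_univ _, ?_⟩
    rw [edgeA]
    apply Finset.image_congr
    intro j _
    push_cast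
    ring
  · rintro ⟨a, _, rfl⟩
    refine ⟨a.val, Finset.mem_range.mpr (ZMod.val_lt a), ?_⟩
    rw [edgeA]
    apply Finset.image_congr
    intro j _
    push_cast
    rw [show ((a.val : ℕ) : ZMod (2 * k)) = a from ZMod.natCast_rightInverse a]

lemma hdeg_tc [NeZero (2 * k)] (hk : 2 ≤ k) (S : Finset (ZMod (2 * k))) :
    hdeg (tightCycle k) S
      = (Finset.univ.filter (fun a : ZMod (2 * k) => S ⊆ edgeA k a)).card := by
  unfold hdeg
  symm
  apply Finset.card_bij (fun a _ => edgeA k a)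
  · intro a ha
    simp only [Finset.mem_filter] at ha ⊢
    refine ⟨?_, ha.2⟩
    rw [tightCycle_eq hk, Finset.mem_image]
    exact ⟨a, Finset.mem_univ _, rfl⟩
  · intro a _ b _ hab
    exact edgeA_inj hk hab
  · intro e he
    simp only [Finset.mem_filter] at he
    rw [tightCycle_eq hk, Finset.mem_image] at he
    obtain ⟨⟨a, _, rfl⟩, hsub⟩ := he
    exact ⟨a, Finset.mem_filter.mpr ⟨Finset.mem_univ _, hsub⟩, rfl⟩

lemma count_shift [NeZero (2 * k)] (hk : 2 ≤ k) (p : ZMod (2 * k) → Prop)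
    [DecidablePred p] (c : ZMod (2 * k)) (d : ℕ) (hd : d < 2 * k)
    (hp : ∀ a, p a ↔ (c - a).val ≤ d) :
    (Finset.univ.filter p).card = d + 1 := by
  rw [← Finset.card_range (d + 1)]
  apply Finset.card_bij' (fun a _ => (c - a).val) (fun u _ => c - (u : ZMod (2 * k)))
  · intro a ha
    rw [Finset.mem_filter, hp a] at ha
    rw [Finset.mem_range]
    omega
  · intro u hu
    rw [Finset.mem_range] at hu
    rw [Finset.mem_filter, hp]
    have h : c - (c - (u : ZMod (2 * k))) = (u : ZMod (2 * k)) := by ring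
    rw [h, ZMod.val_cast_of_lt (by omega)]
    exact ⟨Finset.mem_univ _, by omega⟩
  · intro a _
    rw [ZMod.natCast_rightInverse (c - a)]
    ring
  · intro u hu
    rw [Finset.mem_range] at hu
    have h : c - (c - (u : ZMod (2 * k))) = (u : ZMod (2 * k)) := by ring
    rw [h, ZMod.val_cast_of_lt (by omega)]

lemma sub_val_eq [NeZero (2 * k)] (m : ℕ) (a : ZMod (2 * k)) :
    ((m : ZMod (2 * k)) - a).val = (m + (0 - a).val) % (2 * k) := by
  have h1 : (m : ZMod (2 * k)) - a = ((m + (0 - a).val : ℕ) : ZMod (2 * k)) := by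
    push_cast
    rw [ZMod.natCast_rightInverse (0 - a)]
    ring
  rw [h1, ZMod.val_natCast]

lemma hdeg_T1 [NeZero (2 * k)] (hk : 2 ≤ k) {i : ℕ} (h1 : 1 ≤ i) (h2 : i ≤ k) :
    hdeg (tightCycle k) ((Finset.range i).image (fun m => ((m : ℕ) : ZMod (2 * k))))
      = k - i + 1 := by
  rw [hdeg_tc hk]
  have hmain : (k - i) + 1 = k - i + 1 := rfl
  apply count_shift hk _ 0 (k - i) (by omega)
  intro a
  have hu := ZMod.val_lt (0 - a)
  constructor
  · intro h
    have h0 := (mem_edgeA hk).mp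
      (h (Finset.mem_image_of_mem _ (Finset.mem_range.mpr (show 0 < i by omega))))
    have hi1 := (mem_edgeA hk).mp
      (h (Finset.mem_image_of_mem _ (Finset.mem_range.mpr (show i - 1 < i by omega))))
    rw [sub_val_eq, Nat.mod_eq_of_lt (by omega)] at h0
    rw [sub_val_eq, Nat.mod_eq_of_lt (by omega)] at hi1
    omega
  · intro h x hx
    rw [Finset.mem_image] at hx
    obtain ⟨m, hm, rfl⟩ := hx
    rw [Finset.mem_range] at hm
    rw [mem_edgeA hk, sub_val_eq, Nat.mod_eq_of_lt (by omega)]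
    omega

lemma hdeg_T2 [NeZero (2 * k)] (hk : 2 ≤ k) {i : ℕ} (h1 : 2 ≤ i) (h2 : i ≤ k - 1) :
    hdeg (tightCycle k)
      (insert ((i : ℕ) : ZMod (2 * k))
        ((Finset.range (i - 1)).image (fun m => ((m : ℕ) : ZMod (2 * k)))))
      = k - i := by
  rw [hdeg_tc hk]
  rw [show k - i = (k - i - 1) + 1 by omega]
  apply count_shift hk _ 0 (k - i - 1) (by omega)
  intro a
  have hu := ZMod.val_lt (0 - a)
  constructor
  · intro h
    have h0 := (mem_edgeA hk).mp
      (h (Finset.mem_insert_of_mem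
        (Finset.mem_image_of_mem _ (Finset.mem_range.mpr (show 0 < i - 1 by omega)))))
    have hi1 := (mem_edgeA hk).mp (h (Finset.mem_insert_self _ _))
    rw [sub_val_eq, Nat.mod_eq_of_lt (by omega)] at h0
    rw [sub_val_eq, Nat.mod_eq_of_lt (by omega)] at hi1
    omega
  · intro h x hx
    rcases Finset.mem_insert.mp hx with rfl | hx
    · rw [mem_edgeA hk, sub_val_eq, Nat.mod_eq_of_lt (by omega)]
      omega
    · rw [Finset.mem_image] at hx
      obtain ⟨m, hm, rfl⟩ := hx
      rw [Finset.mem_range] at hm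
      rw [mem_edgeA hk, sub_val_eq, Nat.mod_eq_of_lt (by omega)]
      omega

lemma card_castRange [NeZero (2 * k)] {i : ℕ} (h2 : i ≤ 2 * k) :
    ((Finset.range i).image (fun m => ((m : ℕ) : ZMod (2 * k)))).card = i := by
  rw [Finset.card_image_of_injOn, Finset.card_range]
  intro x hx y hy hxy
  simp only [Finset.coe_range, Set.mem_Iio] at hx hy
  have := congrArg ZMod.val hxy
  rwa [ZMod.val_cast_of_lt (by omega), ZMod.val_cast_of_lt (by omega)] at this

lemma hdeg_tc_singleton [NeZero (2 * k)] (hk : 2 ≤ k) (v : ZMod (2 * k)) :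
    hdeg (tightCycle k) {v} = k := by
  have hp : ∀ a : ZMod (2 * k), {v} ⊆ edgeA k a ↔ (v - a).val ≤ k - 1 := by
    intro a
    have hu := ZMod.val_lt (v - a)
    constructor
    · intro h
      have h0 := (mem_edgeA hk).mp (h (Finset.mem_singleton_self v))
      omega
    · intro h x hx
      rw [Finset.mem_singleton] at hx
      subst hx
      rw [mem_edgeA hk]
      omega
  rw [hdeg_tc hk, count_shift hk _ v (k - 1) (by omega) hp]
  omega

lemma tcVerts_eq [NeZero (2 * k)] (hk : 2 ≤ k) : tcVerts k = Finset.univ := by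
  apply Finset.eq_univ_iff_forall.mpr
  intro a
  rw [tcVerts, Finset.mem_image]
  exact ⟨a.val, Finset.mem_range.mpr (ZMod.val_lt a), ZMod.natCast_rightInverse a⟩

lemma mem_tc_filter [NeZero (2 * k)] (hk : 2 ≤ k) {i : ℕ}
    {T : Finset (ZMod (2 * k))} (hT : T.card = i) :
    T ∈ (tcVerts k).powerset.filter (fun T => T.card = i) := by
  rw [tcVerts_eq hk]
  exact Finset.mem_filter.mpr ⟨Finset.mem_powerset.mpr (Finset.subset_univ T), hT⟩

lemma tcDegGcd_zero (hk : 2 ≤ k) : tcDegGcd k 0 = 2 * k := by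
  haveI : NeZero (2 * k) := ⟨by omega⟩
  have hset : ((tcVerts k).powerset.filter (fun T => T.card = 0))
      = {(∅ : Finset (ZMod (2 * k)))} := by
    ext T
    simp only [Finset.mem_filter, Finset.mem_powerset, Finset.card_eq_zero,
      Finset.mem_singleton]
    exact ⟨fun h => h.2, fun h => ⟨h ▸ Finset.empty_subset _, h⟩⟩
  have hval : hdeg (tightCycle k) ∅ = 2 * k := by
    rw [hdeg_tc hk, Finset.filter_true_of_mem (fun a _ => Finset.empty_subset _),
      Finset.card_univ, ZMod.card]
  rw [tcDegGcd, hset, Finset.gcd_singleton, hval]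
  simp

lemma tcDegGcd_one (hk : 2 ≤ k) : tcDegGcd k 1 = k := by
  haveI : NeZero (2 * k) := ⟨by omega⟩
  apply Nat.dvd_antisymm
  · have hmem := mem_tc_filter hk (T := {(0 : ZMod (2 * k))}) (Finset.card_singleton _)
    have h := Finset.gcd_dvd (f := hdeg (tightCycle k)) hmem
    rw [hdeg_tc_singleton hk] at h
    exact h
  · apply Finset.dvd_gcd
    intro T hT
    obtain ⟨v, rfl⟩ := Finset.card_eq_one.mp (Finset.mem_filter.mp hT).2
    rw [hdeg_tc_singleton hk]

lemma tcDegGcd_mid (hk : 2 ≤ k) {i : ℕ} (h1 : 2 ≤ i) (h2 : i ≤ k - 1) :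
    tcDegGcd k i = 1 := by
  haveI : NeZero (2 * k) := ⟨by omega⟩
  have hd1 : tcDegGcd k i ∣ k - i + 1 := by
    have hcard : ((Finset.range i).image (fun m => ((m : ℕ) : ZMod (2 * k)))).card = i :=
      card_castRange (by omega)
    have h := Finset.gcd_dvd (f := hdeg (tightCycle k)) (mem_tc_filter hk hcard)
    rwa [hdeg_T1 hk (by omega) (by omega)] at h
  have hd2 : tcDegGcd k i ∣ k - i := by
    have hnotmem : ((i : ℕ) : ZMod (2 * k)) ∉
        (Finset.range (i - 1)).image (fun m => ((m : ℕ) : ZMod (2 * k))) := by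
      rw [Finset.mem_image]
      rintro ⟨m, hm, hmi⟩
      rw [Finset.mem_range] at hm
      have := congrArg ZMod.val hmi
      rw [ZMod.val_cast_of_lt (by omega), ZMod.val_cast_of_lt (by omega)] at this
      omega
    have hcard : (insert ((i : ℕ) : ZMod (2 * k))
        ((Finset.range (i - 1)).image (fun m => ((m : ℕ) : ZMod (2 * k))))).card = i := by
      rw [Finset.card_insert_of_notMem hnotmem, card_castRange (by omega)]
      omega
    have h := Finset.gcd_dvd (f := hdeg (tightCycle k)) (mem_tc_filter hk hcard)
    rwa [hdeg_T2 hk h1 h2] at h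
  have hd : tcDegGcd k i ∣ (k - i + 1) - (k - i) := Nat.dvd_sub hd1 hd2
  simpa using hd

lemma hdeg_empty {V : Type*} (G : Finset (Finset V)) : hdeg G ∅ = G.card := by
  simp [hdeg]

end Aux

/-- `C^k_{2k}` satisfies `d(i) = 1` for all `2 ≤ i ≤ k-1`; consequently a
`k`-uniform hypergraph `G` is `C^k_{2k}`-divisible iff `2k ∣ e(G)` and
`k ∣ d_G(v)` for every vertex `v`. -/

theorem stmt_15 (k : ℕ) (hk : 2 ≤ k) :
    (∀ i, 2 ≤ i → i ≤ k - 1 → tcDegGcd k i = 1) ∧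
    (∀ (V : Type) [Fintype V] [DecidableEq V] (G : Finset (Finset V)),
      (∀ e ∈ G, e.card = k) →
      ((∀ i ≤ k - 1, ∀ S : Finset V, S.card = i → tcDegGcd k i ∣ hdeg G S) ↔
        (2 * k ∣ G.card ∧ ∀ v : V, k ∣ hdeg G {v}))) := by
  refine ⟨fun i h1 h2 => tcDegGcd_mid hk h1 h2, ?_⟩
  intro V _ _ G _
  constructor
  · intro h
    constructor
    · have := h 0 (Nat.zero_le _) ∅ Finset.card_empty
      rwa [tcDegGcd_zero hk, hdeg_empty] at this
    · intro v
      have := h 1 (by omega) {v} (Finset.card_singleton v)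
      rwa [tcDegGcd_one hk] at this
  · rintro ⟨hcard, hdegv⟩ i hi S hS
    match i, hi with
    | 0, _ =>
      obtain rfl := Finset.card_eq_zero.mp hS
      rw [tcDegGcd_zero hk, hdeg_empty]
      exact hcard
    | 1, _ =>
      obtain ⟨v, rfl⟩ := Finset.card_eq_one.mp hS
      rw [tcDegGcd_one hk]
      exact hdegv v
    | (m + 2), hi =>
      rw [tcDegGcd_mid hk (by omega) hi]
      exact one_dvd _
end
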